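/- Generalized Bellman–Ford correctness: for every T ≥ 0 and every vertex o, T iterations of the generalized Bellman–Ford recursion compute the path-sum of all walks of length at most T, i.e., x⁽ᵀ⁾(o) = ∑_{t=0}^{T} ∑_{p ∈ P_t(s,o)} weight(p), where P_t(s,o) is the set of walks of length t from s to o in G (so the t = 0 term is 1 if o = s and 0 otherwise). -/

import Mathlib

open Finset

/-- The weight of a walk: the product of the edge weights `wt v_{i-1} v_i` along the
walk, with the length-0 walk having weight 1. -/
def SimpleGraph.Walk.weight {V : Type*} {G : SimpleGraph V} {R : Type*} [CommSemiring R]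
    (wt : V → V → R) {u v : V} (p : G.Walk u v) : R :=
  (p.darts.map fun d => wt d.fst d.snd).prod

/-- `pathSum G wt t s o = ∑_{p ∈ P_t(s,o)} weight(p)`, the sum of the weights of all
walks of length `t` from `s` to `o` in `G`. -/
def pathSum {V : Type*} [Fintype V] [DecidableEq V] (G : SimpleGraph V) [DecidableRel G.Adj]
    {R : Type*} [CommSemiring R] (wt : V → V → R) (t : ℕ) (s o : V) : R :=
  ∑ p ∈ G.finsetWalkLength t s o, p.weight wt

/-- The generalized Bellman–Ford iterates `x⁽ᵗ⁾` with source `s`: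
`x⁽⁰⁾(o) = 1` if `o = s` and `0` otherwise, and
`x⁽ᵗ⁾(o) = (∑_{u adjacent to o} x⁽ᵗ⁻¹⁾(u) * wt u o) + x⁽⁰⁾(o)` for `t ≥ 1`. -/
def genBF {V : Type*} [Fintype V] [DecidableEq V] (G : SimpleGraph V) [DecidableRel G.Adj]
    {R : Type*} [CommSemiring R] (wt : V → V → R) (s : V) : ℕ → V → R
  | 0 => fun o => if o = s then 1 else 0
  | (t + 1) => fun o =>
      (∑ u ∈ G.neighborFinset o, genBF G wt s t u * wt u o) + (if o = s then 1 else 0)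

section Aux
set_option linter.unusedSectionVars false


/-!
Let `M` be the weighted adjacency matrix, `M u v = wt u v` on edges and `0` elsewhere.
Splitting off the first edge of a walk shows that the path-sum over length-`t` walks is the
entry `(M ^ t) s o`; splitting off the last edge instead (`M ^ (t + 1) = M ^ t * M`) gives the
recursion `pathSum (t + 1) s o = ∑_{u ~ o} pathSum t s u * wt u o`, which is exactly the
Bellman–Ford update, so induction on `T` finishes the proof.
-/

namespace SimpleGraph

variable {V : Type*} {G : SimpleGraph V} {R : Type*} [CommSemiring R] (wt : V → V → R)

@[simp]
theorem Walk.weight_nil {u : V} : (nil : G.Walk u u).weight wt = 1 := rfl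

@[simp]
theorem Walk.weight_cons {u v w : V} (h : G.Adj u v) (p : G.Walk v w) :
    (cons h p).weight wt = wt u v * p.weight wt := by
  simp [Walk.weight]

variable (G) in
def weightedAdjMatrix [DecidableRel G.Adj] : Matrix V V R :=
  Matrix.of fun u v => if G.Adj u v then wt u v else 0

end SimpleGraph

open SimpleGraph

section PathSum

variable {V : Type*} [Fintype V] [DecidableEq V] (G : SimpleGraph V) [DecidableRel G.Adj]
  {R : Type*} [CommSemiring R] (wt : V → V → R)

theorem pathSum_zero (s o : V) : pathSum G wt 0 s o = if o = s then 1 else 0 := by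
  obtain rfl | h := eq_or_ne s o
  · simp [pathSum, finsetWalkLength]
  · simp [pathSum, finsetWalkLength, h, Ne.symm h]

theorem pathSum_succ (t : ℕ) (s o : V) :
    pathSum G wt (t + 1) s o = ∑ u ∈ G.neighborFinset s, wt s u * pathSum G wt t u o := by
  rw [pathSum, finsetWalkLength, sum_biUnion]
  · simp only [sum_map, pathSum, neighborFinset_def, ← sum_set_coe, mul_sum]
    exact sum_congr rfl fun u _ => sum_congr rfl fun p _ => Walk.weight_cons wt u.2 p
  · rintro u - u' - hne
    simp only [Function.onFun, Finset.disjoint_left, mem_map]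
    rintro _ ⟨p, -, rfl⟩ ⟨q, -, hqp⟩
    exact hne (Subtype.ext (Walk.cons.inj hqp).1.symm)

theorem pathSum_eq_weightedAdjMatrix_pow_apply (t : ℕ) (s o : V) :
    pathSum G wt t s o = (G.weightedAdjMatrix wt ^ t) s o := by
  induction t generalizing s with
  | zero => simp [pathSum_zero, Matrix.one_apply, eq_comm]
  | succ t ih =>
    simp only [pathSum_succ, ih, pow_succ', Matrix.mul_apply, weightedAdjMatrix, Matrix.of_apply,
      ite_mul, zero_mul, ← sum_filter, neighborFinset_eq_filter]

theorem pathSum_succ' (t : ℕ) (s o : V) :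
    pathSum G wt (t + 1) s o = ∑ u ∈ G.neighborFinset o, pathSum G wt t s u * wt u o := by
  simp only [pathSum_eq_weightedAdjMatrix_pow_apply, pow_succ, Matrix.mul_apply,
    weightedAdjMatrix, Matrix.of_apply, mul_ite, mul_zero, ← sum_filter, neighborFinset_eq_filter,
    G.adj_comm o]

end PathSum

/-- Generalized Bellman–Ford correctness: for every `T ≥ 0` and every
vertex `o`, `T` iterations of the generalized Bellman–Ford recursion compute the
path-sum of all walks of length at most `T`:
`x⁽ᵀ⁾(o) = ∑_{t=0}^{T} ∑_{p ∈ P_t(s,o)} weight(p)`. -/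
theorem genBF_eq_pathSum {V : Type*} [Fintype V] [DecidableEq V]
    (G : SimpleGraph V) [DecidableRel G.Adj] {R : Type*} [CommSemiring R]
    (wt : V → V → R) (s : V) (T : ℕ) (o : V) :
    genBF G wt s T o = ∑ t ∈ Finset.range (T + 1), pathSum G wt t s o := by
  induction T generalizing o with
  | zero => simp [genBF, pathSum_zero]
  | succ T ih =>
    calc genBF G wt s (T + 1) o
        = ∑ t ∈ range (T + 1), ∑ u ∈ G.neighborFinset o, pathSum G wt t s u * wt u o
            + pathSum G wt 0 s o := by
          simp only [genBF, ih, sum_mul, pathSum_zero]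
          rw [sum_comm]
      _ = ∑ t ∈ range (T + 2), pathSum G wt t s o := by
          simp only [← pathSum_succ', sum_range_succ' _ (T + 1)]
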